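/- Let g_t : R^m_+ → R be continuous and strictly increasing with g_t(β_t) = 0 for each t. If scalars u_t and λ_t > 0 satisfy u_s - u_t - λ_t g_t(β_s) ≤ 0 for all s,t, then U(β) = min_t {u_t + λ_t g_t(β)} is a continuous monotone increasing function satisfying U(β_t) = u_t and U(β) ≤ u_t for all β with g_t(β) ≤ 0; hence β_t maximizes U over the nonlinear budget set B_t = {β : g_t(β) ≤ 0}. -/

import Mathlib

/-!
Each piece `u_t + λ_t g_t` is continuous and increasing (as `λ_t > 0`), and a finite minimum
preserves both properties. At `β_t` the piece `t` equals `u_t` because `g_t(β_t) = 0`, while the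
Afriat inequalities `u_t ≤ u_s + λ_s g_s(β_t)` say that no other piece is smaller there, so
`U(β_t) = u_t`. On the budget set `g_t ≤ 0` the piece `t`, hence `U`, is at most `u_t`.
-/

section AfriatUtility

variable {ι X : Type*} [Fintype ι] [Nonempty ι]

noncomputable def afriatUtility (u l : ι → ℝ) (g : ι → X → ℝ) (x : X) : ℝ :=
  Finset.univ.inf' Finset.univ_nonempty fun t => u t + l t * g t x

variable {u l : ι → ℝ} {g : ι → X → ℝ}

theorem afriatUtility_le (t : ι) (x : X) : afriatUtility u l g x ≤ u t + l t * g t x :=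
  Finset.inf'_le _ (Finset.mem_univ t)

theorem afriatUtility_le_of_nonpos {t : ι} {x : X} (hl : 0 ≤ l t) (hx : g t x ≤ 0) :
    afriatUtility u l g x ≤ u t :=
  (afriatUtility_le t x).trans (by nlinarith)

theorem afriatUtility_eq {β : ι → X} (hg0 : ∀ t, g t (β t) = 0)
    (hAfriat : ∀ s t, u s - u t - l t * g t (β s) ≤ 0) (t : ι) :
    afriatUtility u l g (β t) = u t := by
  refine le_antisymm ?_ (Finset.le_inf' _ _ fun s _ => by linarith [hAfriat t s])
  exact (afriatUtility_le t (β t)).trans_eq (by rw [hg0 t, mul_zero, add_zero])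

theorem continuous_afriatUtility [TopologicalSpace X] (hg : ∀ t, Continuous (g t)) :
    Continuous (afriatUtility u l g) :=
  Continuous.finset_inf'_apply _ fun t _ => continuous_const.add (continuous_const.mul (hg t))

theorem monotone_afriatUtility [Preorder X] (hl : ∀ t, 0 ≤ l t) (hg : ∀ t, Monotone (g t)) :
    Monotone (afriatUtility u l g) := fun a b hab =>
  Finset.le_inf' _ _ fun t _ =>
    (afriatUtility_le t a).trans (by gcongr; exacts [hl t, hg t hab])

end AfriatUtility

/-- Forges–Minelli, nonlinear budgets: if `u_t, λ_t > 0` satisfy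
`u_s - u_t - λ_t g_t(β_s) ≤ 0` for all `s,t`, with `g_t` continuous, strictly
increasing and `g_t(β_t) = 0`, then `U(β) = min_t (u_t + λ_t g_t(β))` is
continuous, monotone, satisfies `U(β_t) = u_t`, `U(β) ≤ u_t` on the budget set
`{g_t ≤ 0}`, and hence `β_t` maximizes `U` over that budget set. -/
theorem nonlinear_afriat_construction {m N : ℕ} (hN : 0 < N)
    (β : Fin N → Fin m → ℝ)
    (g : Fin N → (Fin m → ℝ) → ℝ)
    (hgc : ∀ t, Continuous (g t)) (hgm : ∀ t, StrictMono (g t))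
    (hg0 : ∀ t, g t (β t) = 0)
    (us ls : Fin N → ℝ) (hls : ∀ t, 0 < ls t)
    (hAfriat : ∀ s t, us s - us t - ls t * g t (β s) ≤ 0)
    (U : (Fin m → ℝ) → ℝ)
    (hU : ∀ b, U b = Finset.univ.inf' ⟨⟨0, hN⟩, Finset.mem_univ _⟩
      (fun t => us t + ls t * g t b)) :
    Continuous U ∧ Monotone U ∧ (∀ t, U (β t) = us t) ∧
      (∀ t b, g t b ≤ 0 → U b ≤ us t) ∧
      (∀ t b, g t b ≤ 0 → U b ≤ U (β t)) := by
  have : Nonempty (Fin N) := ⟨⟨0, hN⟩⟩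
  obtain rfl : U = afriatUtility us ls g := funext hU
  have hUβ := afriatUtility_eq hg0 hAfriat
  have hbudget : ∀ t b, g t b ≤ 0 → afriatUtility us ls g b ≤ us t :=
    fun t _ hb => afriatUtility_le_of_nonpos (hls t).le hb
  refine ⟨continuous_afriatUtility hgc,
    monotone_afriatUtility (fun t => (hls t).le) (fun t => (hgm t).monotone), hUβ, hbudget,
    fun t b hb => (hUβ t).symm ▸ hbudget t b hb⟩
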